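/- Let A be a finite commutative ring such that |D|·|D^⊥| = |A|ⁿ holds for every A-submodule D ⊆ Aⁿ (this holds whenever A is a finite commutative Frobenius ring). Let f ∈ R = A[X; θ, δ] be monic of degree n with f = h·g = g·ħ, deg(g) = n−k, and let M be the n × n matrix over A whose i-th row is the coefficient vector of X^{i−1}·ħ mod f. Let C ⊆ Aⁿ be the vector representation of 𝒞 = Rg/Rf, so that |C| = |A|^k. Then the Euclidean dual code C^⊥ equals the A-module generated by the columns of M, and |C^⊥| = |A|^{n−k}. -/

import Mathlib

/-- The skew polynomial ring `R = A[X; θ, δ]`: a ring `R` together with a coefficient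
embedding `C : A →+* R` and an indeterminate `X` satisfying the commutation rule
`X * C a = C (θ a) * X + C (δ a)`, such that every element of `R` is, in a unique way,
a left polynomial `Σᵢ C aᵢ * X ^ i`. -/
structure SkewPolyRing (A : Type*) [Ring A] (θ : A →+* A) (δ : A →+ A)
    (R : Type*) [Ring R] where
  /-- embedding of the coefficient ring -/
  C : A →+* R
  /-- the indeterminate -/
  X : R
  /-- the commutation rule `X·a = θ(a)·X + δ(a)` -/
  X_mul : ∀ a : A, X * C a = C (θ a) * X + C (δ a)
  /-- every element of `R` is uniquely a left polynomial in `X` -/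
  equiv : (ℕ →₀ A) ≃ R
  equiv_apply : ∀ p : ℕ →₀ A, equiv p = p.sum fun i a => C a * X ^ i

namespace SkewPolyRing

variable {A : Type*} [Ring A] {θ : A →+* A} {δ : A →+ A} {R : Type*} [Ring R]

/-- the `i`-th coefficient of a skew polynomial -/
noncomputable def coeff (S : SkewPolyRing A θ δ R) (f : R) (i : ℕ) : A :=
  S.equiv.symm f i

/-- the degree of a skew polynomial (the degree of `0` is `⊥ = -∞`) -/
noncomputable def deg (S : SkewPolyRing A θ δ R) (f : R) : WithBot ℕ :=
  (S.equiv.symm f).support.max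

/-- the degree of a skew polynomial, as a natural number -/
noncomputable def natDeg (S : SkewPolyRing A θ δ R) (f : R) : ℕ :=
  WithBot.unbotD 0 (S.deg f)

/-- the leading coefficient of a skew polynomial -/
noncomputable def lc (S : SkewPolyRing A θ δ R) (f : R) : A :=
  S.coeff f (S.natDeg f)

end SkewPolyRing


/-!
A vector `w` lies in `C`, i.e. `Σ wᵢ Xⁱ = u g`, iff `(Σ wᵢ Xⁱ) ħ` is a left multiple of
`f = g ħ`. Reducing each `Xⁱ ħ` modulo `f` turns this into `Σᵢ wᵢ Mᵢⱼ = 0` for all `j`,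
because a nonzero left multiple of `f` (monic of degree `n`), resp. of `ħ` (whose leading
coefficient is a unit), has a nonzero coefficient in degree `≥ n`, resp. `≥ k`. So `C` is the
dual of the column span `D` of `M`. The cardinality hypothesis for `D` and `D^⊥` gives
`|D^⊥⊥| = |D|`, hence `D = D^⊥⊥ = C^⊥`, and for `C` it gives `|C^⊥| = |A|ⁿ / |A|ᵏ`.
-/

namespace SkewPolyRing

section Ring

variable {A : Type*} [Ring A] {θ : A →+* A} {δ : A →+ A} {R : Type*} [Ring R]
  (S : SkewPolyRing A θ δ R)

theorem equiv_add (p q : ℕ →₀ A) : S.equiv (p + q) = S.equiv p + S.equiv q := by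
  simp only [S.equiv_apply]
  exact Finsupp.sum_add_index' (fun _ => by simp) fun _ _ _ => by rw [map_add, add_mul]

noncomputable def addEquiv : (ℕ →₀ A) ≃+ R := { S.equiv with map_add' := S.equiv_add }

noncomputable def coeffHom (i : ℕ) : R →+ A :=
  (Finsupp.applyAddHom i).comp S.addEquiv.symm.toAddMonoidHom

theorem coeffHom_apply (r : R) (i : ℕ) : S.coeffHom i r = S.coeff r i := rfl

theorem coeff_add (r s : R) (i : ℕ) : S.coeff (r + s) i = S.coeff r i + S.coeff s i :=
  map_add (S.coeffHom i) r s

theorem coeff_zero (i : ℕ) : S.coeff 0 i = 0 :=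
  map_zero (S.coeffHom i)

theorem coeff_sum {ι : Type*} (s : Finset ι) (r : ι → R) (i : ℕ) :
    S.coeff (∑ j ∈ s, r j) i = ∑ j ∈ s, S.coeff (r j) i :=
  map_sum (S.coeffHom i) r s

theorem coeff_C_mul_X_pow (a : A) (i j : ℕ) :
    S.coeff (S.C a * S.X ^ i) j = Finsupp.single i a j := by
  have : S.equiv (Finsupp.single i a) = S.C a * S.X ^ i := by
    rw [S.equiv_apply, Finsupp.sum_single_index (by simp)]
  rw [coeff, ← this, Equiv.symm_apply_apply]

theorem addMonoidHom_ext {M : Type*} [AddCommMonoid M] {φ ψ : R →+ M}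
    (h : ∀ (a : A) (i : ℕ), φ (S.C a * S.X ^ i) = ψ (S.C a * S.X ^ i)) : φ = ψ := by
  ext r
  obtain ⟨p, rfl⟩ := S.equiv.surjective r
  rw [S.equiv_apply, map_finsuppSum, map_finsuppSum]
  exact Finsupp.sum_congr fun i _ => h _ i

theorem coeff_C_mul (a : A) (r : R) (j : ℕ) : S.coeff (S.C a * r) j = a * S.coeff r j := by
  have : (S.coeffHom j).comp (AddMonoidHom.mulLeft (S.C a))
      = (AddMonoidHom.mulLeft a).comp (S.coeffHom j) :=
    S.addMonoidHom_ext fun b i => by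
      simp only [AddMonoidHom.coe_comp, Function.comp_apply, AddMonoidHom.coe_mulLeft,
        coeffHom_apply, ← mul_assoc, ← map_mul, coeff_C_mul_X_pow, Finsupp.single_apply, mul_ite,
        mul_zero]
  exact DFunLike.congr_fun this r

theorem coeff_X_mul_succ (r : R) (j : ℕ) :
    S.coeff (S.X * r) (j + 1) = θ (S.coeff r j) + δ (S.coeff r (j + 1)) := by
  have : (S.coeffHom (j + 1)).comp (AddMonoidHom.mulLeft S.X)
      = θ.toAddMonoidHom.comp (S.coeffHom j) + δ.comp (S.coeffHom (j + 1)) :=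
    S.addMonoidHom_ext fun a i => by
      have hX : S.X * (S.C a * S.X ^ i) = S.C (θ a) * S.X ^ (i + 1) + S.C (δ a) * S.X ^ i := by
        rw [← mul_assoc, S.X_mul, add_mul, mul_assoc, ← pow_succ']
      simp only [AddMonoidHom.coe_comp, Function.comp_apply, AddMonoidHom.coe_mulLeft,
        AddMonoidHom.add_apply, RingHom.toAddMonoidHom_eq_coe, AddMonoidHom.coe_coe,
        coeffHom_apply, hX, coeff_add, coeff_C_mul_X_pow, Finsupp.single_apply,
        Nat.add_right_cancel_iff, apply_ite θ, apply_ite δ, map_zero]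
  exact DFunLike.congr_fun this r

theorem coeff_X_pow_mul {r : R} {d : ℕ} (hr : ∀ i, d < i → S.coeff r i = 0) (m : ℕ) :
    (∀ i, d + m < i → S.coeff (S.X ^ m * r) i = 0)
      ∧ S.coeff (S.X ^ m * r) (d + m) = (θ ^ m) (S.coeff r d) := by
  induction m with
  | zero => simpa using hr
  | succ m ih =>
    rw [pow_succ', mul_assoc]
    refine ⟨fun i hi => ?_, ?_⟩
    · obtain ⟨i, rfl⟩ : ∃ i', i = i' + 1 := ⟨i - 1, by omega⟩
      rw [coeff_X_mul_succ, ih.1 i (by omega), ih.1 (i + 1) (by omega), map_zero, map_zero,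
        add_zero]
    · rw [← add_assoc, coeff_X_mul_succ, ih.2, ih.1 _ (by omega), map_zero, add_zero, pow_succ']
      rfl

theorem eq_sum_range {p : R} {d : ℕ} (hp : ∀ i, d < i → S.coeff p i = 0) :
    p = ∑ i ∈ Finset.range (d + 1), S.C (S.coeff p i) * S.X ^ i := by
  conv_lhs => rw [← S.equiv.apply_symm_apply p, S.equiv_apply]
  refine Finsupp.sum_of_support_subset _ (fun i hi => ?_) _ fun _ _ => by simp
  by_contra hid
  exact Finsupp.mem_support_iff.mp hi (hp i (by simpa using hid))

theorem coeff_mul_eq_sum {p : R} {d : ℕ} (hp : ∀ i, d < i → S.coeff p i = 0) (q : R) (j : ℕ) :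
    S.coeff (p * q) j = ∑ i ∈ Finset.range (d + 1), S.coeff p i * S.coeff (S.X ^ i * q) j := by
  conv_lhs => rw [S.eq_sum_range hp, Finset.sum_mul]
  simp only [coeff_sum, mul_assoc, coeff_C_mul]

theorem coeff_mul_add {p q : R} {dp dq : ℕ} (hp : ∀ i, dp < i → S.coeff p i = 0)
    (hq : ∀ i, dq < i → S.coeff q i = 0) :
    S.coeff (p * q) (dp + dq) = S.coeff p dp * (θ ^ dp) (S.coeff q dq) := by
  rw [S.coeff_mul_eq_sum hp, Finset.sum_range_succ, Finset.sum_eq_zero, zero_add, add_comm,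
    (S.coeff_X_pow_mul hq dp).2]
  intro i hi
  rw [(S.coeff_X_pow_mul hq i).1 _ (by simp at hi; omega), mul_zero]

theorem coeff_eq_zero_of_deg_le_of_lt {r : R} {d i : ℕ} (h : S.deg r ≤ d) (hi : d < i) :
    S.coeff r i = 0 := by
  by_contra hne
  exact (Finset.le_max (Finsupp.mem_support_iff.mpr hne)).not_gt
    (h.trans_lt (WithBot.coe_lt_coe.mpr hi))

theorem coeff_eq_zero_of_natDeg_lt {r : R} {i : ℕ} (h : S.natDeg r < i) : S.coeff r i = 0 :=
  S.coeff_eq_zero_of_deg_le_of_lt (WithBot.le_coe_unbotD _ 0) h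

theorem lc_ne_zero {r : R} (hr : r ≠ 0) : S.lc r ≠ 0 := by
  have hs : (S.equiv.symm r).support.Nonempty :=
    Finsupp.support_nonempty_iff.mpr ((map_ne_zero_iff _ S.addEquiv.symm.injective).mpr hr)
  obtain ⟨m, hm⟩ := Finset.max_of_nonempty hs
  have hnd : S.natDeg r = m := by rw [natDeg, deg, hm]; rfl
  rw [lc, hnd]
  exact Finsupp.mem_support_iff.mp (Finset.mem_of_max hm)

theorem eq_zero_of_coeff_mul_eq_zero {p q : R} {d : ℕ} (hq : ∀ i, d < i → S.coeff q i = 0)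
    (hu : IsUnit (S.coeff q d)) (hpq : ∀ i, d ≤ i → S.coeff (p * q) i = 0) : p = 0 := by
  by_contra hp
  have htop := S.coeff_mul_add (fun i => S.coeff_eq_zero_of_natDeg_lt (r := p) (i := i)) hq
  rw [hpq _ (Nat.le_add_left _ _), eq_comm, (hu.map (θ ^ S.natDeg p)).mul_left_eq_zero] at htop
  exact S.lc_ne_zero hp htop

open Matrix

noncomputable def ofVec {n : ℕ} (v : Fin n → A) : R :=
  ∑ j : Fin n, S.C (v j) * S.X ^ (j : ℕ)

theorem coeff_ofVec {n : ℕ} (v : Fin n → A) (i : Fin n) : S.coeff (S.ofVec v) i = v i := by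
  simp [ofVec, coeff_sum, coeff_C_mul_X_pow, Finsupp.single_apply, Fin.val_inj]

theorem coeff_ofVec_of_le {n : ℕ} (v : Fin n → A) {i : ℕ} (hi : n ≤ i) :
    S.coeff (S.ofVec v) i = 0 :=
  (S.coeff_sum _ _ _).trans <| Finset.sum_eq_zero fun j _ => by
    rw [coeff_C_mul_X_pow, Finsupp.single_eq_of_ne (by omega)]

theorem ofVec_eq_zero_iff {n : ℕ} {v : Fin n → A} : S.ofVec v = 0 ↔ v = 0 := by
  refine ⟨fun h => funext fun i => ?_, fun h => by simp [h, ofVec]⟩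
  rw [← S.coeff_ofVec v i, h, coeff_zero, Pi.zero_apply]

theorem sum_C_mul_ofVec {n : ℕ} (w : Fin n → A) (M : Matrix (Fin n) (Fin n) A) :
    ∑ i, S.C (w i) * S.ofVec (M i) = S.ofVec (w ᵥ* M) := by
  simp only [ofVec, Finset.mul_sum, ← mul_assoc, ← map_mul, Matrix.vecMul, dotProduct, map_sum,
    Finset.sum_mul]
  exact Finset.sum_comm

theorem exists_ofVec_mul_eq {n : ℕ} {f b : R} {M : Matrix (Fin n) (Fin n) A}
    (hM : ∀ i : Fin n, ∃ q : R, S.X ^ (i : ℕ) * b = q * f + S.ofVec (M i)) (w : Fin n → A) :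
    ∃ Q : R, S.ofVec w * b = Q * f + S.ofVec (w ᵥ* M) := by
  choose q hq using hM
  refine ⟨∑ i, S.C (w i) * q i, ?_⟩
  calc S.ofVec w * b = ∑ i, S.C (w i) * (S.X ^ (i : ℕ) * b) := by
        simp only [ofVec, Finset.sum_mul, mul_assoc]
    _ = ∑ i, S.C (w i) * q i * f + ∑ i, S.C (w i) * S.ofVec (M i) := by
        simp only [hq, mul_add, mul_assoc, Finset.sum_add_distrib]
    _ = _ := by rw [Finset.sum_mul, S.sum_C_mul_ofVec]

variable {n : ℕ} {f : R} (hf : ∀ i, n < i → S.coeff f i = 0) (hmf : S.coeff f n = 1)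
include hf hmf

theorem eq_zero_of_ofVec_eq_mul {v : Fin n → A} {u : R} (h : S.ofVec v = u * f) : u = 0 :=
  S.eq_zero_of_coeff_mul_eq_zero hf (hmf ▸ isUnit_one) fun i hi => by
    rw [← h, S.coeff_ofVec_of_le v hi]

theorem exists_ofVec_eq_mul_iff {g b : R} {k : ℕ} (hfac : f = g * b)
    (hb : ∀ i, k < i → S.coeff b i = 0) (hlc : IsUnit (S.coeff b k))
    {M : Matrix (Fin n) (Fin n) A}
    (hM : ∀ i : Fin n, ∃ q : R, S.X ^ (i : ℕ) * b = q * f + S.ofVec (M i)) (w : Fin n → A) :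
    (∃ u : R, S.ofVec w = u * g) ↔ w ᵥ* M = 0 := by
  obtain ⟨Q, hQ⟩ := S.exists_ofVec_mul_eq hM w
  constructor
  · rintro ⟨u, hu⟩
    have hrem : S.ofVec (w ᵥ* M) = (u - Q) * f := by
      rw [sub_mul, eq_sub_iff_add_eq', ← hQ, hu, mul_assoc, ← hfac]
    rw [← S.ofVec_eq_zero_iff, hrem, S.eq_zero_of_ofVec_eq_mul hf hmf hrem, zero_mul]
  · intro hw
    refine ⟨Q, sub_eq_zero.mp (S.eq_zero_of_coeff_mul_eq_zero hb hlc fun i _ => ?_)⟩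
    rw [sub_mul, hQ, hw, S.ofVec_eq_zero_iff.mpr rfl, add_zero, mul_assoc, ← hfac, sub_self,
      coeff_zero]

end Ring

end SkewPolyRing

section DualCode

open Matrix

variable {A ι : Type*} [CommRing A] [Fintype ι]

def dualCode (D : Submodule A (ι → A)) : Submodule A (ι → A) where
  carrier := {v | ∀ d ∈ D, v ⬝ᵥ d = 0}
  add_mem' hv hw d hd := by rw [add_dotProduct, hv d hd, hw d hd, add_zero]
  zero_mem' _ _ := zero_dotProduct _
  smul_mem' a _ hv d hd := by rw [smul_dotProduct, hv d hd, smul_zero]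

theorem mem_dualCode_span {s : Set (ι → A)} {v : ι → A} :
    v ∈ dualCode (Submodule.span A s) ↔ ∀ c ∈ s, v ⬝ᵥ c = 0 :=
  ⟨fun hv c hc => hv c (Submodule.subset_span hc), fun hv _ hd =>
    (Submodule.span_le (p := LinearMap.ker (dotProductBilin A A v))).mpr hv hd⟩

theorem mem_dualCode_columnSpan {n : Type*} [Fintype n] (M : Matrix ι n A) (w : ι → A) :
    w ∈ dualCode (Submodule.span A (Set.range fun j i => M i j)) ↔ w ᵥ* M = 0 := by
  rw [mem_dualCode_span, Set.forall_mem_range, funext_iff]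
  rfl

theorem le_dualCode_dualCode (D : Submodule A (ι → A)) : D ≤ dualCode (dualCode D) :=
  fun d hd v hv => by rw [dotProduct_comm]; exact hv d hd

theorem dualCode_dualCode_eq [Finite A]
    (hcard : ∀ D : Submodule A (ι → A),
      Nat.card D * Nat.card (dualCode D) = Nat.card A ^ Fintype.card ι)
    (D : Submodule A (ι → A)) : dualCode (dualCode D) = D := by
  have hDD : Nat.card (dualCode (dualCode D)) = Nat.card D := by
    have h := (hcard (dualCode D)).trans (hcard D).symm
    rw [mul_comm] at h
    exact Nat.eq_of_mul_eq_mul_right Nat.card_pos h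
  exact (SetLike.coe_injective
    ((Set.toFinite _).eq_of_subset_of_card_le (le_dualCode_dualCode D) hDD.le)).symm

end DualCode

theorem dual_eq_columnSpan_general
    {A R : Type*} [CommRing A] [Finite A] [Ring R]
    (θ : A →+* A) (δ : A →+ A)
    (S : SkewPolyRing A θ δ R)
    (n k : ℕ) (hkn : k ≤ n)
    (hFrob : ∀ D : Submodule A (Fin n → A),
      Nat.card D * Nat.card {v : Fin n → A | ∀ d ∈ D, ∑ i, v i * d i = 0}
        = Nat.card A ^ n)
    (f g hbar : R)
    (hdegf : S.deg f = (n : WithBot ℕ)) (hmf : S.coeff f n = 1)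
    (h2 : f = g * hbar)
    (hdeghbar : S.deg hbar = (k : WithBot ℕ))
    (hlc : IsUnit (S.coeff hbar k))
    (M : Matrix (Fin n) (Fin n) A)
    (hM : ∀ i : Fin n, ∃ q : R,
      S.X ^ (i : ℕ) * hbar = q * f + ∑ j : Fin n, S.C (M i j) * S.X ^ (j : ℕ))
    (C : Set (Fin n → A))
    (hC : C = {w | ∃ u : R, (∑ i : Fin n, S.C (w i) * S.X ^ (i : ℕ)) = u * g})
    (hcard : Nat.card C = Nat.card A ^ k) :
    {v : Fin n → A | ∀ c ∈ C, ∑ i, v i * c i = 0}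
        = (Submodule.span A (Set.range fun j : Fin n => fun i : Fin n => M i j) :
            Set (Fin n → A)) ∧
    Nat.card {v : Fin n → A | ∀ c ∈ C, ∑ i, v i * c i = 0} = Nat.card A ^ (n - k) := by
  set D := Submodule.span A (Set.range fun j : Fin n => fun i : Fin n => M i j)
  have hFrob' : ∀ D : Submodule A (Fin n → A),
      Nat.card D * Nat.card (dualCode D) = Nat.card A ^ Fintype.card (Fin n) := by
    rw [Fintype.card_fin]
    exact hFrob
  have hCD : C = dualCode D := by
    ext w
    rw [hC]
    exact (S.exists_ofVec_eq_mul_iff (fun _ => S.coeff_eq_zero_of_deg_le_of_lt hdegf.le) hmf h2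
      (fun _ => S.coeff_eq_zero_of_deg_le_of_lt hdeghbar.le) hlc hM w).trans
      (mem_dualCode_columnSpan M w).symm
  subst hCD
  change (dualCode (dualCode D) : Set (Fin n → A)) = D ∧ Nat.card (dualCode (dualCode D)) = _
  rw [dualCode_dualCode_eq hFrob']
  have hsplit := hFrob' (dualCode D)
  rw [dualCode_dualCode_eq hFrob', Fintype.card_fin, ← SetLike.coe_sort_coe, hcard] at hsplit
  refine ⟨rfl, Nat.eq_of_mul_eq_mul_left (pow_pos (Nat.card_pos (α := A)) k) ?_⟩
  rw [← pow_add, Nat.add_sub_cancel' hkn, hsplit]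

/-- Let `A` be a finite commutative ring satisfying
`|D| * |D^⊥| = |A| ^ n` for every `A`-submodule `D ⊆ Aⁿ` (as holds for finite commutative
Frobenius rings). Let `f = h * g = g * ħ` be monic of degree `n` in `R = A[X; θ, δ]` with
`deg g = n - k`, let `M` be the `n × n` matrix whose `i`-th row is the coefficient vector
of `X^(i-1) * ħ mod f`, and let `C ⊆ Aⁿ` be the vector representation of `𝒞 = Rg/Rf`,
so that `|C| = |A| ^ k`. Then the Euclidean dual `C^⊥` equals the `A`-module generated by
the columns of `M`, and `|C^⊥| = |A| ^ (n - k)`. -/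
theorem dual_eq_columnSpan
    {A R : Type*} [CommRing A] [Nontrivial A] [Finite A] [Ring R]
    (θ : A →+* A) (δ : A →+ A)
    (hδ : ∀ a b : A, δ (a * b) = δ a * b + θ a * δ b)
    (S : SkewPolyRing A θ δ R)
    (n k : ℕ) (hkn : k ≤ n)
    (hFrob : ∀ D : Submodule A (Fin n → A),
      Nat.card D * Nat.card {v : Fin n → A | ∀ d ∈ D, ∑ i, v i * d i = 0}
        = Nat.card A ^ n)
    (f g h hbar : R)
    (hdegf : S.deg f = (n : WithBot ℕ)) (hmf : S.coeff f n = 1)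
    (h1 : f = h * g) (h2 : f = g * hbar)
    (hdegg : S.deg g = ((n - k : ℕ) : WithBot ℕ))
    (hdeghbar : S.deg hbar = (k : WithBot ℕ))
    (hlc : IsUnit (S.coeff hbar k))
    (M : Matrix (Fin n) (Fin n) A)
    (hM : ∀ i : Fin n, ∃ q : R,
      S.X ^ (i : ℕ) * hbar = q * f + ∑ j : Fin n, S.C (M i j) * S.X ^ (j : ℕ))
    (C : Set (Fin n → A))
    (hC : C = {w | ∃ u : R, (∑ i : Fin n, S.C (w i) * S.X ^ (i : ℕ)) = u * g})
    (hcard : Nat.card C = Nat.card A ^ k) :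
    {v : Fin n → A | ∀ c ∈ C, ∑ i, v i * c i = 0}
        = (Submodule.span A (Set.range fun j : Fin n => fun i : Fin n => M i j) :
            Set (Fin n → A)) ∧
    Nat.card {v : Fin n → A | ∀ c ∈ C, ∑ i, v i * c i = 0} = Nat.card A ^ (n - k) :=
  dual_eq_columnSpan_general θ δ S n k hkn hFrob f g hbar hdegf hmf h2 hdeghbar hlc M hM C hC hcard
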